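/- Let ℤ carry the discrete metric, Iso(ℤ) the group of all bijections of ℤ with the metric ϱ(f,g) = Σ_{i=1}^∞ 3^{-i} d(f z_i, g z_i) for a fixed enumeration {z_i} of ℤ, and let Iso(Iso(ℤ)) be the group of surjective isometries of (Iso(ℤ), ϱ) acting on Iso(ℤ) by evaluation. Then this action is Cauchy-indivisible, and Iso(Iso(ℤ)) has no Weil completion: there exists a sequence {T_n} in Iso(Iso(ℤ)) that is Cauchy with respect to the uniformity of pointwise convergence on Iso(ℤ) while {T_n^{-1}} is not Cauchy. -/

import Mathlib

open Filter Topology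

noncomputable section

/-- The discrete metric on `ℤ`. -/
def dZ (m n : ℤ) : ℝ := if m = n then 0 else 1

/-- The metric `ϱ(f,g) = Σ_{i=1}^∞ 3⁻ⁱ d(f zᵢ, g zᵢ)` on `Iso(ℤ) = Perm ℤ`, for a
fixed enumeration `z` of `ℤ`. -/
def rhoZ (z : ℕ → ℤ) (f g : Equiv.Perm ℤ) : ℝ :=
  ∑' i : ℕ, (1 / 3 : ℝ) ^ (i + 1) * dZ (f (z i)) (g (z i))

/-- `Iso(Iso(ℤ))`: the surjective isometries of `(Iso(ℤ), ϱ)`. -/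
def IsoIsoZ (z : ℕ → ℤ) : Type :=
  { T : Equiv.Perm ℤ → Equiv.Perm ℤ //
      Function.Surjective T ∧ ∀ f g : Equiv.Perm ℤ, rhoZ z (T f) (T g) = rhoZ z f g }

/-- `S` is a cluster point of the net `T` in `Iso(Iso(ℤ))` for the topology of
pointwise convergence on `(Iso(ℤ), ϱ)`; a net has a convergent subnet with limit `S`
iff `S` is a cluster point. -/
def ClusterPW (z : ℕ → ℤ) {ι : Type*} [Preorder ι] (T : ι → IsoIsoZ z)
    (S : IsoIsoZ z) : Prop :=
  ∀ ε : ℝ, 0 < ε → ∀ F : Finset (Equiv.Perm ℤ), ∀ i₀ : ι,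
    ∃ i, i₀ ≤ i ∧ ∀ f ∈ F, rhoZ z ((T i).1 f) (S.1 f) < ε

/-- A Cauchy net in `(Iso(ℤ), ϱ)`. -/
def CauchyNetRho (z : ℕ → ℤ) {ι : Type*} [Preorder ι] (c : ι → Equiv.Perm ℤ) : Prop :=
  ∀ ε : ℝ, 0 < ε → ∃ i₀ : ι, ∀ i j, i₀ ≤ i → i₀ ≤ j → rhoZ z (c i) (c j) < ε

/-!
A surjective isometry `T` of `(Iso(ℤ), ϱ)` preserves `ϱ(f, g)`, and `ϱ(f, g)` is the value of a
base-3 expansion with digits in `{0, 1}` recording where `f` and `g` differ; such expansions are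
injective, so `T f` and `T g` differ exactly where `f` and `g` do. Feeding transpositions into this
shows `T f = T 1 * f`: every element of `Iso(Iso(ℤ))` is a left translation. Cauchy nets for `ϱ`
are the pointwise eventually constant ones, so `(T i f)` is Cauchy iff `(T i 1)` is, for every
`f`. Finally the cycles `0 → 1 → ⋯ → n → 0` are pointwise eventually constant, while their
inverses send `0` to `n`.
-/

open Function Equiv

lemma Filter.eventuallyConst_atTop_iff {ι β : Type*} [Preorder ι] [IsDirected ι (· ≤ ·)]
    [Nonempty ι] {u : ι → β} :
    EventuallyConst u atTop ↔ ∃ i₀, ∀ i, i₀ ≤ i → ∀ j, i₀ ≤ j → u i = u j :=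
  atTop_basis.eventuallyConst_iff.trans <| by simp only [Set.mem_Ici, true_and]

lemma Equiv.Perm.exists_apply_eq_and_apply_eq {α : Type*} [DecidableEq α] {x y a b : α}
    (hxy : x ≠ y) (hab : a ≠ b) : ∃ h : Perm α, h x = a ∧ h y = b := by
  have hxa : swap x a y ≠ a := fun h => hxy <| (swap x a).injective (by rw [h, swap_apply_left])
  exact ⟨swap (swap x a y) b * swap x a, by simp [swap_apply_of_ne_of_ne hxa.symm hab], by simp⟩

lemma Equiv.Perm.eq_mul_of_apply_eq_apply_iff {α : Type*} {T : Perm α → Perm α}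
    (hT : Surjective T) (hagree : ∀ f g x, T f x = T g x ↔ f x = g x) (f : Perm α) :
    T f = T 1 * f := by
  classical
  set φ : α → α → α := fun x a => T (swap x a) x
  have hφ (f : Perm α) (x : α) : T f x = φ x (f x) := (hagree _ _ x).2 (swap_apply_left _ _).symm
  have φ_surj (x : α) : Surjective (φ x) := fun b => by
    obtain ⟨h, hh⟩ := hT (swap x b)
    exact ⟨h x, by rw [← hφ, hh, swap_apply_left]⟩
  -- `φ x b = φ y a` with `b ≠ a` would let `T h` identify `x` and `y` for `h x = b`, `h y = a`.
  have φ_eq (x y a : α) : φ x a = φ y a := by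
    by_contra hne
    have hxy : x ≠ y := by rintro rfl; exact hne rfl
    obtain ⟨b, hb⟩ := φ_surj x (φ y a)
    have hba : b ≠ a := by rintro rfl; exact hne hb
    obtain ⟨h, hx, hy⟩ := Perm.exists_apply_eq_and_apply_eq hxy hba
    exact hxy ((T h).injective (by rw [hφ h x, hφ h y, hx, hy, hb]))
  ext x
  rw [hφ, φ_eq x (f x), Perm.mul_apply, hφ, Perm.one_apply]

lemma dZ_nonneg (m n : ℤ) : 0 ≤ dZ m n := by unfold dZ; split_ifs <;> norm_num

lemma dZ_le_one (m n : ℤ) : dZ m n ≤ 1 := by unfold dZ; split_ifs <;> norm_num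

lemma dZ_perm_apply (σ : Perm ℤ) (m n : ℤ) : dZ (σ m) (σ n) = dZ m n := by
  simp only [dZ, σ.injective.eq_iff]

section rhoZ

variable (z : ℕ → ℤ) (f g : Perm ℤ)

lemma summable_rhoZ : Summable fun i : ℕ => (1 / 3 : ℝ) ^ (i + 1) * dZ (f (z i)) (g (z i)) := by
  refine ((summable_geometric_of_lt_one (r := (1 / 3 : ℝ)) (by norm_num) (by norm_num)).mul_left
    (1 / 3)).of_nonneg_of_le (fun i => mul_nonneg (by positivity) (dZ_nonneg _ _)) fun i => ?_
  rw [pow_succ']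
  exact mul_le_of_le_one_right (by positivity) (dZ_le_one _ _)

lemma rhoZ_eq_cantorFunction :
    rhoZ z f g = 1 / 3 * Cardinal.cantorFunction (1 / 3) fun i => !decide (f (z i) = g (z i)) := by
  rw [rhoZ, Cardinal.cantorFunction, ← tsum_mul_left]
  congr 1 with i
  by_cases h : f (z i) = g (z i) <;> simp [Cardinal.cantorFunctionAux, dZ, h, pow_succ']

variable {z f g}

lemma pow_le_rhoZ {k : ℕ} (h : f (z k) ≠ g (z k)) : (1 / 3 : ℝ) ^ (k + 1) ≤ rhoZ z f g := by
  simpa [rhoZ, dZ, h] using (summable_rhoZ z f g).le_tsum k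
    fun i _ => mul_nonneg (by positivity) (dZ_nonneg _ _)

lemma rhoZ_le_pow {K : ℕ} (h : ∀ k < K, f (z k) = g (z k)) : rhoZ z f g ≤ (1 / 3 : ℝ) ^ K := by
  have hgeom := summable_geometric_of_lt_one (r := (1 / 3 : ℝ)) (by norm_num) (by norm_num)
  have hhead : ∑ i ∈ Finset.range K, (1 / 3 : ℝ) ^ (i + 1) * dZ (f (z i)) (g (z i)) = 0 :=
    Finset.sum_eq_zero fun i hi => by simp [dZ, h i (Finset.mem_range.1 hi)]
  rw [rhoZ, ← (summable_rhoZ z f g).sum_add_tsum_nat_add K, hhead, zero_add]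
  calc ∑' n, (1 / 3 : ℝ) ^ (n + K + 1) * dZ (f (z (n + K))) (g (z (n + K)))
      ≤ ∑' n, (1 / 3 : ℝ) ^ (K + 1) * (1 / 3) ^ n := by
        refine ((summable_rhoZ z f g).comp_injective (add_left_injective K)).tsum_le_tsum
          (fun n => ?_) (hgeom.mul_left _)
        exact (mul_le_of_le_one_right (by positivity) (dZ_le_one _ _)).trans_eq (by ring)
    _ = (1 / 3) ^ K / 2 := by
        rw [tsum_mul_left, tsum_geometric_of_lt_one (by norm_num) (by norm_num), pow_succ]; ring
    _ ≤ (1 / 3) ^ K := by linarith [pow_pos (by norm_num : (0 : ℝ) < 1 / 3) K]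

end rhoZ

namespace IsoIsoZ

variable {z : ℕ → ℤ}

lemma apply_eq_apply_iff (T : IsoIsoZ z) (f g : Perm ℤ) (k : ℕ) :
    T.1 f (z k) = T.1 g (z k) ↔ f (z k) = g (z k) := by
  have h := T.2.2 f g
  rw [rhoZ_eq_cantorFunction, rhoZ_eq_cantorFunction, mul_right_inj' (by norm_num)] at h
  simpa using congrFun (Cardinal.cantorFunction_injective (by norm_num) (by norm_num) h) k

lemma apply_eq_mul (hz : Surjective z) (T : IsoIsoZ z) (f : Perm ℤ) : T.1 f = T.1 1 * f :=
  Perm.eq_mul_of_apply_eq_apply_iff T.2.1 (fun f g => hz.forall.2 (T.apply_eq_apply_iff f g)) f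

variable (z) in
def leftMul (σ : Perm ℤ) : IsoIsoZ z :=
  ⟨(σ * ·), fun g => ⟨σ⁻¹ * g, mul_inv_cancel_left σ g⟩,
    fun f g => by simp only [rhoZ, Perm.mul_apply, dZ_perm_apply]⟩

end IsoIsoZ

section CauchyNet

variable {z : ℕ → ℤ} {ι : Type*} [Preorder ι] [IsDirected ι (· ≤ ·)] [Nonempty ι]

lemma cauchyNetRho_iff (hz : Surjective z) (c : ι → Perm ℤ) :
    CauchyNetRho z c ↔ ∀ x, EventuallyConst (fun i => c i x) atTop := by
  simp only [hz.forall, eventuallyConst_atTop_iff]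
  constructor
  · intro h k
    obtain ⟨i₀, hi₀⟩ := h _ (pow_pos (by norm_num : (0 : ℝ) < 1 / 3) (k + 1))
    exact ⟨i₀, fun i hi j hj => by_contra fun hne => (hi₀ i j hi hj).not_ge (pow_le_rhoZ hne)⟩
  · intro h ε hε
    classical
    obtain ⟨K, hK⟩ := exists_pow_lt_of_lt_one hε (by norm_num : (1 / 3 : ℝ) < 1)
    choose i₀ hi₀ using h
    obtain ⟨M, hM⟩ := Finset.exists_le ((Finset.range K).image i₀)
    refine ⟨M, fun i j hi hj => (rhoZ_le_pow fun k hk => ?_).trans_lt hK⟩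
    have hkM := hM _ (Finset.mem_image_of_mem _ (Finset.mem_range.2 hk))
    exact hi₀ k i (hkM.trans hi) j (hkM.trans hj)

lemma cauchyNetRho_mul_right_iff (hz : Surjective z) (c : ι → Perm ℤ) (f : Perm ℤ) :
    CauchyNetRho z (fun i => c i * f) ↔ CauchyNetRho z c := by
  simp only [cauchyNetRho_iff hz, Perm.mul_apply]
  exact (f.surjective.forall (p := fun x => EventuallyConst (fun i => c i x) atTop)).symm

lemma IsoIsoZ.cauchyNetRho_apply_iff (hz : Surjective z) (T : ι → IsoIsoZ z) (f : Perm ℤ) :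
    CauchyNetRho z (fun i => (T i).1 f) ↔ CauchyNetRho z (fun i => (T i).1 1) := by
  simp_rw [IsoIsoZ.apply_eq_mul hz _ f]
  exact cauchyNetRho_mul_right_iff hz _ f

end CauchyNet

def cycleUpTo (n : ℕ) : Perm ℤ where
  toFun k := if 0 ≤ k ∧ k < n then k + 1 else if k = n then 0 else k
  invFun k := if 1 ≤ k ∧ k ≤ n then k - 1 else if k = 0 then n else k
  left_inv k := by dsimp only; split_ifs <;> omega
  right_inv k := by dsimp only; split_ifs <;> omega

lemma eventuallyConst_cycleUpTo_apply (x : ℤ) : EventuallyConst (fun n => cycleUpTo n x) atTop :=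
  eventuallyConst_atTop_nat.2 ⟨x.toNat + 1, fun m hm => by
    simp only [cycleUpTo, coe_fn_mk]; split_ifs <;> omega⟩

lemma cycleUpTo_inv_zero (n : ℕ) : (cycleUpTo n)⁻¹ 0 = n := by
  simp [cycleUpTo, Perm.inv_def]

lemma not_eventuallyConst_cycleUpTo_inv_zero :
    ¬ EventuallyConst (fun n => (cycleUpTo n)⁻¹ 0) atTop := by
  simp only [cycleUpTo_inv_zero, eventuallyConst_atTop_nat, not_exists]
  exact fun n h => by simpa using h n le_rfl

/-- Proposition 6.5: the evaluation action of `Iso(Iso(ℤ))` on `(Iso(ℤ), ϱ)` is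
Cauchy-indivisible, and `Iso(Iso(ℤ))` has no Weil completion: there is a sequence
`(T_n)` in `Iso(Iso(ℤ))` which is Cauchy for the uniformity of pointwise convergence
on `Iso(ℤ)` while the sequence of inverses `(T_n⁻¹)` is not Cauchy. -/
theorem isoIsoZ_cauchyIndivisible_and_no_weil (z : ℕ → ℤ) (hz : Function.Bijective z) :
    (∀ (ι : Type) [Nonempty ι] [Preorder ι] [IsDirected ι (· ≤ ·)],
      ∀ T : ι → IsoIsoZ z, (∀ S : IsoIsoZ z, ¬ ClusterPW z T S) →
        (∃ f : Equiv.Perm ℤ, CauchyNetRho z fun i => (T i).1 f) →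
        ∀ g : Equiv.Perm ℤ, CauchyNetRho z fun i => (T i).1 g) ∧
    ∃ T Tinv : ℕ → IsoIsoZ z,
      (∀ n : ℕ, Function.LeftInverse ((Tinv n).1) ((T n).1) ∧
        Function.RightInverse ((Tinv n).1) ((T n).1)) ∧
      (∀ f : Equiv.Perm ℤ, CauchyNetRho z fun n => (T n).1 f) ∧
      ¬ (∀ f : Equiv.Perm ℤ, CauchyNetRho z fun n => (Tinv n).1 f) := by
  refine ⟨fun ι _ _ _ T _ ⟨f, hf⟩ g => ?_, ?_⟩
  · exact (IsoIsoZ.cauchyNetRho_apply_iff hz.2 T g).2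
      ((IsoIsoZ.cauchyNetRho_apply_iff hz.2 T f).1 hf)
  refine ⟨fun n => IsoIsoZ.leftMul z (cycleUpTo n), fun n => IsoIsoZ.leftMul z (cycleUpTo n)⁻¹,
    fun n => ⟨inv_mul_cancel_left _, mul_inv_cancel_left _⟩, fun f => ?_, fun h => ?_⟩
  · exact (cauchyNetRho_iff hz.2 _).2 fun x => eventuallyConst_cycleUpTo_apply (f x)
  · exact not_eventuallyConst_cycleUpTo_inv_zero ((cauchyNetRho_iff hz.2 _).1 (h 1) 0)

end
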